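/- Let N ≥ 2 and α > −1, and set Z_α(x) := (N−1 − |x|^{N(α+1)/(N−1)})/(1 + |x|^{N(α+1)/(N−1)}). Then for every x ∈ ℝ^N \ {0}, div( |∇U_α|^{N−2} ∇Z_α + (N−2) |∇U_α|^{N−4} ⟨∇U_α, ∇Z_α⟩ ∇U_α )(x) + |x|^{Nα} e^{U_α(x)} Z_α(x) = 0, where div denotes the Euclidean divergence. -/

import Mathlib

open MeasureTheory Filter
open scoped RealInnerProductSpace Topology

noncomputable section

/-- The dimensional constant `c_N = N (N²/(N-1))^{N-1}`. -/
def cconst (N : ℕ) : ℝ := N * ((N : ℝ) ^ 2 / ((N : ℝ) - 1)) ^ (N - 1)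

/-- The explicit radial solution
`U_α(x) = log( c_N (α+1)^N / (1 + |x|^{N(α+1)/(N-1)})^N )`. -/
def Ualpha (N : ℕ) (α : ℝ) (x : EuclideanSpace ℝ (Fin N)) : ℝ :=
  Real.log (cconst N * (α + 1) ^ N /
    (1 + ‖x‖ ^ ((N : ℝ) * (α + 1) / ((N : ℝ) - 1))) ^ N)

/-- The linearized vector field `A(U_α)∇φ = |∇U_α|^{N-2}∇φ + (N-2)|∇U_α|^{N-4}⟨∇U_α,∇φ⟩∇U_α`. -/
def linField (N : ℕ) (α : ℝ) (φ : EuclideanSpace ℝ (Fin N) → ℝ)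
    (x : EuclideanSpace ℝ (Fin N)) : EuclideanSpace ℝ (Fin N) :=
  ‖gradient (Ualpha N α) x‖ ^ ((N : ℝ) - 2) • gradient φ x
    + (((N : ℝ) - 2) * ‖gradient (Ualpha N α) x‖ ^ ((N : ℝ) - 4) *
        ⟪gradient (Ualpha N α) x, gradient φ x⟫) • gradient (Ualpha N α) x

/-- A bounded weak solution of the linearized equation
`-div(A(U_α)∇φ) = |x|^{Nα} e^{U_α} φ` in `ℝ^N`. -/
def IsLinearizedSolution (N : ℕ) (α : ℝ) (φ : EuclideanSpace ℝ (Fin N) → ℝ) : Prop :=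
  (∃ C : ℝ, ∀ x : EuclideanSpace ℝ (Fin N), |φ x| ≤ C) ∧
  ContDiffOn ℝ 1 φ {(0 : EuclideanSpace ℝ (Fin N))}ᶜ ∧
  ∀ ψ : EuclideanSpace ℝ (Fin N) → ℝ, ContDiff ℝ (⊤ : ℕ∞) ψ → HasCompactSupport ψ →
    ∫ x, ⟪linField N α φ x, gradient ψ x⟫
      = ∫ x, ‖x‖ ^ ((N : ℝ) * α) * Real.exp (Ualpha N α x) * φ x * ψ x

/-- The special values `α_k = √((k² + (N-2)k)/(N-1)) - 1`. -/
def alphaK (N k : ℕ) : ℝ :=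
  Real.sqrt (((k : ℝ) ^ 2 + ((N : ℝ) - 2) * k) / ((N : ℝ) - 1)) - 1

/-- The radial element `Z_α = (N-1 - |x|^{N(α+1)/(N-1)})/(1 + |x|^{N(α+1)/(N-1)})`
of the kernel of the linearized operator, generated by scaling invariance. -/
def Zalpha (N : ℕ) (α : ℝ) (x : EuclideanSpace ℝ (Fin N)) : ℝ :=
  ((N : ℝ) - 1 - ‖x‖ ^ ((N : ℝ) * (α + 1) / ((N : ℝ) - 1))) /
    (1 + ‖x‖ ^ ((N : ℝ) * (α + 1) / ((N : ℝ) - 1)))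

/-- Euclidean divergence of a vector field on `ℝ^N`. -/
def ediv {N : ℕ} (F : EuclideanSpace ℝ (Fin N) → EuclideanSpace ℝ (Fin N))
    (x : EuclideanSpace ℝ (Fin N)) : ℝ :=
  ∑ i, fderiv ℝ F x (EuclideanSpace.single i 1) i

namespace S16
variable {N : ℕ} {α : ℝ}
local notation "E" => EuclideanSpace ℝ (Fin N)

lemma hasFDerivAt_normSq (x : E) :
    HasFDerivAt (fun y : E => ‖y‖ ^ 2) ((2:ℝ) • (innerSL ℝ x)) x := by
  have h := (hasFDerivAt_id x).inner ℝ (hasFDerivAt_id x)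
  have he : (fun y : E => ‖y‖ ^ 2) = fun y : E => ⟪y, y⟫ := by
    ext y; rw [real_inner_self_eq_norm_sq]
  rw [he]
  refine h.congr_fderiv ?_
  ext v
  simp only [ContinuousLinearMap.smul_apply, innerSL_apply_apply, ContinuousLinearMap.comp_apply,
    ContinuousLinearMap.prod_apply, ContinuousLinearMap.coe_id', id_eq, fderivInnerCLM_apply]
  rw [real_inner_comm, smul_eq_mul, two_mul]

lemma radial_hasFDerivAt {h : ℝ → ℝ} {h' : ℝ} {x : E}
    (hh : HasDerivAt h h' (‖x‖ ^ 2)) :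
    HasFDerivAt (fun y : E => h (‖y‖ ^ 2)) ((2 * h') • innerSL ℝ x) x := by
  have H := hh.hasFDerivAt.comp x (hasFDerivAt_normSq x)
  refine H.congr_fderiv ?_
  ext v
  simp only [ContinuousLinearMap.smul_apply, innerSL_apply_apply, ContinuousLinearMap.comp_apply,
    ContinuousLinearMap.smulRight_apply, ContinuousLinearMap.one_apply, smul_eq_mul, ContinuousLinearMap.toSpanSingleton_apply]
  ring

lemma radial_hasGradientAt {h : ℝ → ℝ} {h' : ℝ} {x : E}
    (hh : HasDerivAt h h' (‖x‖ ^ 2)) :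
    HasGradientAt (fun y : E => h (‖y‖ ^ 2)) ((2 * h') • x) x := by
  have H := radial_hasFDerivAt hh
  rw [HasGradientAt, HasGradientAtFilter]
  have : (InnerProductSpace.toDual ℝ E) ((2 * h') • x) = (2 * h') • innerSL ℝ x := by
    ext v
    simp [InnerProductSpace.toDual_apply_apply, real_inner_smul_left]
  rw [this]
  exact H

def bb (N : ℕ) (α : ℝ) : ℝ := (N:ℝ) * (α + 1) / ((N:ℝ) - 1)

lemma bb_pos (hN : 2 ≤ N) (hα : -1 < α) : 0 < bb N α := by
  have h1 : (0:ℝ) < (N:ℝ) := by positivity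
  have h2 : (0:ℝ) < (N:ℝ) - 1 := by
    have : (2:ℝ) ≤ (N:ℝ) := by exact_mod_cast hN
    linarith
  have h3 : (0:ℝ) < α + 1 := by linarith
  exact div_pos (mul_pos h1 h3) h2

lemma cconst_pos (hN : 2 ≤ N) : 0 < cconst N := by
  have h1 : (0:ℝ) < (N:ℝ) := by positivity
  have h2 : (0:ℝ) < (N:ℝ) - 1 := by
    have : (2:ℝ) ≤ (N:ℝ) := by exact_mod_cast hN
    linarith
  have : (0:ℝ) < (N:ℝ)^2 / ((N:ℝ) - 1) := by positivity
  exact mul_pos h1 (pow_pos this _)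

lemma Cc_pos (hN : 2 ≤ N) (hα : -1 < α) : 0 < cconst N * (α+1)^N :=
  mul_pos (cconst_pos hN) (pow_pos (by linarith) _)

lemma normsq_rpow (y : E) (p : ℝ) : (‖y‖^2 : ℝ) ^ (p/2) = ‖y‖ ^ p := by
  rw [← Real.rpow_natCast ‖y‖ 2, ← Real.rpow_mul (norm_nonneg y)]
  congr 1
  ring

def hU (N : ℕ) (α : ℝ) (t : ℝ) : ℝ :=
  Real.log (cconst N * (α+1)^N) - N * Real.log (1 + t ^ (bb N α / 2))

def hZ (N : ℕ) (α : ℝ) (t : ℝ) : ℝ :=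
  ((N:ℝ) - 1 - t ^ (bb N α / 2)) / (1 + t ^ (bb N α / 2))

lemma q_nonneg {t : ℝ} (ht : 0 ≤ t) :
    0 ≤ t ^ (bb N α / 2) ∧ (0:ℝ) < 1 + t ^ (bb N α / 2) := by
  have := Real.rpow_nonneg ht (bb N α / 2)
  exact ⟨this, by linarith⟩

lemma Ualpha_eq (hN : 2 ≤ N) (hα : -1 < α) (y : E) :
    Ualpha N α y = hU N α (‖y‖^2) := by
  have h2 := (q_nonneg (N := N) (α := α) (by positivity : (0:ℝ) ≤ ‖y‖^2)).2
  rw [Ualpha, hU, normsq_rpow, bb, Real.log_div (Cc_pos hN hα).ne' (by positivity), Real.log_pow]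

lemma Zalpha_eq (y : E) : Zalpha N α y = hZ N α (‖y‖^2) := by
  rw [Zalpha, hZ, normsq_rpow, bb]

def mU (N : ℕ) (α : ℝ) (s : ℝ) : ℝ :=
  -((N:ℝ) * bb N α * s ^ (bb N α / 2 - 1) / (1 + s ^ (bb N α / 2)))

def mZ (N : ℕ) (α : ℝ) (s : ℝ) : ℝ :=
  -((N:ℝ) * bb N α * s ^ (bb N α / 2 - 1) / (1 + s ^ (bb N α / 2)) ^ 2)

lemma hasDerivAt_hU (hN : 2 ≤ N) (hα : -1 < α) {s : ℝ} (hs : 0 < s) :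
    HasDerivAt (hU N α) (mU N α s / 2) s := by
  set c := bb N α / 2 with hc
  have hq : HasDerivAt (fun t : ℝ => t ^ c) (c * s ^ (c - 1)) s :=
    Real.hasDerivAt_rpow_const (Or.inl hs.ne')
  have hden : HasDerivAt (fun t : ℝ => 1 + t ^ c) (c * s ^ (c - 1)) s := hq.const_add 1
  have hD := (q_nonneg (N := N) (α := α) hs.le).2
  have hlog := hden.log hD.ne'
  have H := (hlog.const_mul (N:ℝ)).const_sub (Real.log (cconst N * (α+1)^N))
  refine H.congr_deriv ?_
  rw [mU, hc]
  field_simp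

lemma hasDerivAt_hZ (hN : 2 ≤ N) (hα : -1 < α) {s : ℝ} (hs : 0 < s) :
    HasDerivAt (hZ N α) (mZ N α s / 2) s := by
  set c := bb N α / 2 with hc
  have hq : HasDerivAt (fun t : ℝ => t ^ c) (c * s ^ (c - 1)) s :=
    Real.hasDerivAt_rpow_const (Or.inl hs.ne')
  have hnum : HasDerivAt (fun t : ℝ => (N:ℝ) - 1 - t ^ c) (-(c * s ^ (c - 1))) s :=
    hq.const_sub _
  have hden : HasDerivAt (fun t : ℝ => 1 + t ^ c) (c * s ^ (c - 1)) s := hq.const_add 1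
  have hD := (q_nonneg (N := N) (α := α) hs.le).2
  have H := hnum.div hden hD.ne'
  refine H.congr_deriv ?_
  rw [mZ, hc]
  field_simp
  ring

lemma grad_U (hN : 2 ≤ N) (hα : -1 < α) {y : E} (hy : y ≠ 0) :
    HasGradientAt (Ualpha N α) (mU N α (‖y‖^2) • y) y := by
  have hs : (0:ℝ) < ‖y‖^2 := pow_pos (norm_pos_iff.mpr hy) 2
  have H := radial_hasGradientAt (hasDerivAt_hU hN hα hs)
  have he : (fun z : E => hU N α (‖z‖^2)) = Ualpha N α := by
    ext z; rw [Ualpha_eq hN hα]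
  rw [he] at H
  convert H using 2
  ring

lemma grad_Z (hN : 2 ≤ N) (hα : -1 < α) {y : E} (hy : y ≠ 0) :
    HasGradientAt (Zalpha N α) (mZ N α (‖y‖^2) • y) y := by
  have hs : (0:ℝ) < ‖y‖^2 := pow_pos (norm_pos_iff.mpr hy) 2
  have H := radial_hasGradientAt (hasDerivAt_hZ hN hα hs)
  have he : (fun z : E => hZ N α (‖z‖^2)) = Zalpha N α := by
    ext z; rw [Zalpha_eq]
  rw [he] at H
  convert H using 2
  ring

/-- simplified scalar factor of the linearized field -/
def gg (N : ℕ) (α : ℝ) (s : ℝ) : ℝ :=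
  -(((N:ℝ) - 1) * ((N:ℝ) * bb N α) ^ (N - 1)) * s ^ ((N:ℝ) * α / 2) /
    (1 + s ^ (bb N α / 2)) ^ N

lemma mU_neg (hN : 2 ≤ N) (hα : -1 < α) {s : ℝ} (hs : 0 < s) : mU N α s < 0 := by
  have hb := bb_pos hN hα
  have h1 : (0:ℝ) < (N:ℝ) := by positivity
  have h2 := Real.rpow_pos_of_pos hs (bb N α / 2 - 1)
  have hD := (q_nonneg (N := N) (α := α) hs.le).2
  rw [mU]
  have : 0 < (N:ℝ) * bb N α * s ^ (bb N α / 2 - 1) / (1 + s ^ (bb N α / 2)) := by positivity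
  linarith

lemma sq_rpow {r : ℝ} (hr : 0 ≤ r) (p : ℝ) : (r^2 : ℝ) ^ (p/2) = r ^ p := by
  rw [← Real.rpow_natCast r 2, ← Real.rpow_mul hr]
  congr 1
  ring

lemma key_scalar (hN : 2 ≤ N) (hα : -1 < α) {r : ℝ} (hr : 0 < r) :
    (-mU N α (r^2) * r) ^ ((N:ℝ) - 2) * mZ N α (r^2) +
      ((N:ℝ) - 2) * (-mU N α (r^2) * r) ^ ((N:ℝ) - 4) *
        (mU N α (r^2) * (mZ N α (r^2) * r^2)) * mU N α (r^2) = gg N α (r^2) := by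
  obtain ⟨k, rfl⟩ : ∃ k, N = k + 2 := ⟨N - 2, by omega⟩
  set N := k + 2 with hNdef
  have hn1 : (1:ℝ) ≤ (N:ℝ) := by exact_mod_cast Nat.one_le_iff_ne_zero.mpr (by omega)
  have hs : (0:ℝ) < r^2 := by positivity
  set s := r^2 with hsdef
  set b := bb N α with hbdef
  have hb : 0 < b := bb_pos hN hα
  set P := s ^ (b/2 - 1) with hPdef
  have hP : 0 < P := Real.rpow_pos_of_pos hs _
  set q := s ^ (b/2) with hqdef
  set D := 1 + q with hDdef
  have hD : 0 < D := (q_nonneg (N := N) (α := α) hs.le).2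
  set Nb := (N:ℝ) * b with hNbdef
  have hNb : 0 < Nb := by positivity
  have hmU : mU N α s = -(Nb * P / D) := by rw [mU]
  have hmZ : mZ N α s = -(Nb * P / D^2) := by rw [mZ]
  set w := Nb * P / D * r with hwdef
  have hw : 0 < w := by positivity
  have hmUr : -mU N α s * r = w := by rw [hmU]; ring
  -- step 1: collapse the two rpow terms
  have hw2 : mU N α s * mU N α s * s = w ^ (2:ℕ) := by
    rw [hmU, hwdef, hsdef]; ring
  have h24 : w ^ ((N:ℝ) - 4) * w ^ (2:ℕ) = w ^ ((N:ℝ) - 2) := by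
    rw [← Real.rpow_natCast w 2, ← Real.rpow_add hw]
    congr 1
    push_cast
    ring
  have step1 : (-mU N α s * r) ^ ((N:ℝ) - 2) * mZ N α s +
      ((N:ℝ) - 2) * (-mU N α s * r) ^ ((N:ℝ) - 4) *
        (mU N α s * (mZ N α s * s)) * mU N α s
      = ((N:ℝ) - 1) * w ^ ((N:ℝ) - 2) * mZ N α s := by
    rw [hmUr]
    have : ((N:ℝ) - 2) * w ^ ((N:ℝ) - 4) * (mU N α s * (mZ N α s * s)) * mU N α s
        = ((N:ℝ) - 2) * (w ^ ((N:ℝ) - 4) * w ^ (2:ℕ)) * mZ N α s := by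
      rw [← hw2]; ring
    rw [this, h24]; ring
  rw [step1]
  -- step 2: convert the rpow to a natural power
  have hcast : ((k:ℝ)) = (N:ℝ) - 2 := by push_cast [hNdef]; ring
  have hpow : w ^ ((N:ℝ) - 2) = w ^ (k:ℕ) := by
    rw [← hcast, Real.rpow_natCast]
  rw [hpow, hmZ]
  -- step 3: combine powers of s
  have h1 : P ^ (k:ℕ) = s ^ ((b/2 - 1) * (k:ℝ)) := by
    rw [hPdef, ← Real.rpow_natCast (s ^ (b/2-1)) k, ← Real.rpow_mul hs.le]
  have h2 : r ^ (k:ℕ) = s ^ ((k:ℝ)/2) := by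
    rw [hsdef, sq_rpow hr.le, Real.rpow_natCast]
  have hcomb : s ^ ((b/2 - 1) * (k:ℝ)) * (s ^ ((k:ℝ)/2) * P) = s ^ ((N:ℝ) * α / 2) := by
    rw [hPdef, ← Real.rpow_add hs, ← Real.rpow_add hs]
    congr 1
    rw [hbdef, bb, hcast]
    have hne : (N:ℝ) - 1 ≠ 0 := by
      have : (2:ℝ) ≤ (N:ℝ) := by exact_mod_cast hN
      intro h; linarith
    field_simp
    ring
  have hfinal : ((N:ℝ) - 1) * w ^ (k:ℕ) * -(Nb * P / D ^ 2)
      = -(((N:ℝ) - 1) * Nb ^ (k + 1)) * (P ^ (k:ℕ) * (r ^ (k:ℕ) * P)) / D ^ (k + 2) := by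
    rw [hwdef, div_mul_eq_mul_div, div_pow]
    field_simp
    ring
  have hgg : gg N α s = -(((N:ℝ) - 1) * Nb ^ (k + 1)) * s ^ ((N:ℝ) * α / 2) / D ^ (k + 2) := by
    have e1 : N - 1 = k + 1 := by omega
    have e2 : D ^ N = D ^ (k + 2) := by rw [hNdef]
    rw [gg, ← hbdef, ← hNbdef, ← hqdef, ← hDdef, e1, e2]
  rw [hfinal, h1, h2, hcomb, hgg]

lemma linField_eq (hN : 2 ≤ N) (hα : -1 < α) {y : E} (hy : y ≠ 0) :
    linField N α (Zalpha N α) y = gg N α (‖y‖^2) • y := by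
  have hs : (0:ℝ) < ‖y‖^2 := pow_pos (norm_pos_iff.mpr hy) 2
  rw [linField, (grad_U hN hα hy).gradient, (grad_Z hN hα hy).gradient]
  rw [norm_smul, smul_smul, smul_smul, ← add_smul]
  congr 1
  rw [real_inner_smul_left, real_inner_smul_right, real_inner_self_eq_norm_sq]
  rw [Real.norm_eq_abs, abs_of_neg (mU_neg hN hα hs)]
  exact key_scalar hN hα (norm_pos_iff.mpr hy)

lemma field_hasFDerivAt {g : ℝ → ℝ} {g' : ℝ} {x : E} (hg : HasDerivAt g g' (‖x‖ ^ 2)) :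
    HasFDerivAt (fun y : E => g (‖y‖ ^ 2) • y)
      (g (‖x‖ ^ 2) • ContinuousLinearMap.id ℝ (EuclideanSpace ℝ (Fin N)) +
        ContinuousLinearMap.smulRight ((2 * g') • innerSL ℝ x) x) x := by
  exact (radial_hasFDerivAt hg).smul (hasFDerivAt_id x)

lemma sum_coord_sq (x : E) : ∑ i, x i * x i = ‖x‖ ^ 2 := by
  rw [← real_inner_self_eq_norm_sq]
  rfl

lemma ediv_field (hN : 2 ≤ N) (hα : -1 < α) {x : E} (hx : x ≠ 0)
    {g : ℝ → ℝ} {g' : ℝ} (hg : HasDerivAt g g' (‖x‖ ^ 2))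
    (hF : ∀ y : E, y ≠ 0 → linField N α (Zalpha N α) y = g (‖y‖ ^ 2) • y) :
    ediv (linField N α (Zalpha N α)) x = N * g (‖x‖ ^ 2) + 2 * g' * ‖x‖ ^ 2 := by
  have hmem : {(0 : E)}ᶜ ∈ 𝓝 x := (isOpen_compl_singleton).mem_nhds hx
  have heq : linField N α (Zalpha N α) =ᶠ[𝓝 x] fun y : E => g (‖y‖ ^ 2) • y := by
    filter_upwards [hmem] with y hy
    exact hF y hy
  have hfd : fderiv ℝ (linField N α (Zalpha N α)) x
      = fderiv ℝ (fun y : E => g (‖y‖ ^ 2) • y) x := heq.fderiv_eq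
  rw [ediv]
  simp only [hfd, (field_hasFDerivAt hg).fderiv]
  have hterm : ∀ i : Fin N,
      (g (‖x‖ ^ 2) • ContinuousLinearMap.id ℝ (EuclideanSpace ℝ (Fin N)) +
        ContinuousLinearMap.smulRight ((2 * g') • innerSL ℝ x) x)
          (EuclideanSpace.single i 1) i
      = g (‖x‖ ^ 2) + 2 * g' * (x i * x i) := by
    intro i
    simp only [ContinuousLinearMap.add_apply, ContinuousLinearMap.smul_apply,
      ContinuousLinearMap.coe_id', id_eq, ContinuousLinearMap.smulRight_apply,
      innerSL_apply_apply]
    have h1 : ⟪x, EuclideanSpace.single i 1⟫ = x i := by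
      rw [EuclideanSpace.inner_single_right]
      simp
    rw [PiLp.add_apply, PiLp.smul_apply, PiLp.smul_apply, EuclideanSpace.single_apply,
      if_pos rfl, h1]
    simp only [smul_eq_mul]
    ring
  rw [Finset.sum_congr rfl fun i _ => hterm i, Finset.sum_add_distrib,
    Finset.sum_const, ← Finset.mul_sum, sum_coord_sq x]
  simp [Finset.card_univ]

def gg' (N : ℕ) (α : ℝ) (s : ℝ) : ℝ :=
  ((-(((N:ℝ)-1) * ((N:ℝ)*bb N α)^(N-1)) * ((N:ℝ)*α/2 * s ^ ((N:ℝ)*α/2 - 1)))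
      * (1+s^(bb N α/2))^N
    - (-(((N:ℝ)-1) * ((N:ℝ)*bb N α)^(N-1)) * s ^ ((N:ℝ)*α/2)) *
        ((N:ℝ) * (1+s^(bb N α/2))^(N-1) * (bb N α/2 * s^(bb N α/2 - 1))))
    / ((1+s^(bb N α/2))^N)^2

lemma hasDerivAt_gg (hN : 2 ≤ N) (hα : -1 < α) {s : ℝ} (hs : 0 < s) :
    HasDerivAt (gg N α) (gg' N α s) s := by
  have hq : HasDerivAt (fun t : ℝ => t ^ (bb N α/2)) (bb N α/2 * s^(bb N α/2 - 1)) s :=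
    Real.hasDerivAt_rpow_const (Or.inl hs.ne')
  have hden : HasDerivAt (fun t : ℝ => (1 + t ^ (bb N α/2))^N)
      ((N:ℝ) * (1+s^(bb N α/2))^(N-1) * (bb N α/2 * s^(bb N α/2 - 1))) s :=
    (hq.const_add 1).pow N
  have hnum : HasDerivAt (fun t : ℝ => -(((N:ℝ)-1) * ((N:ℝ)*bb N α)^(N-1)) * t ^ ((N:ℝ)*α/2))
      (-(((N:ℝ)-1) * ((N:ℝ)*bb N α)^(N-1)) * ((N:ℝ)*α/2 * s ^ ((N:ℝ)*α/2 - 1))) s :=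
    (Real.hasDerivAt_rpow_const (Or.inl hs.ne')).const_mul _
  have hDne : ((1+s^(bb N α/2)) : ℝ)^N ≠ 0 :=
    pow_ne_zero _ (q_nonneg (N := N) (α := α) hs.le).2.ne'
  rw [gg']
  exact hnum.div hden hDne

lemma nsub1 (hN : 2 ≤ N) : ((N:ℝ)) - 1 ≠ 0 := by
  have : (2:ℝ) ≤ (N:ℝ) := by exact_mod_cast hN
  intro h; linarith

lemma Cc_eq (hN : 2 ≤ N) (hα : -1 < α) :
    cconst N * (α+1)^N = (((N:ℝ)-1) * ((N:ℝ)*bb N α)^(N-1)) * bb N α := by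
  have hne := nsub1 (N := N) hN
  have h1 : (N:ℝ) * bb N α = (N:ℝ)^2/((N:ℝ)-1) * (α+1) := by
    rw [bb]; field_simp
  have h2 : (α+1)^N = (α+1)^(N-1) * (α+1) := by
    rw [← pow_succ]; congr 1; omega
  rw [cconst, h1, mul_pow, h2, bb]
  field_simp

lemma ode_identity (hN : 2 ≤ N) (hα : -1 < α) {s : ℝ} (hs : 0 < s) :
    (N:ℝ) * gg N α s + 2 * gg' N α s * s
      + s ^ ((N:ℝ)*α/2) * (cconst N * (α+1)^N / (1+s^(bb N α/2))^N)
        * (((N:ℝ) - 1 - s^(bb N α/2)) / (1+s^(bb N α/2))) = 0 := by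
  obtain ⟨k, rfl⟩ : ∃ k, N = k + 2 := ⟨N - 2, by omega⟩
  set N := k + 2 with hNdef
  have hne := nsub1 (N := N) hN
  rw [Cc_eq hN hα, gg, gg']
  set b := bb N α with hbdef
  have hb : 0 < b := bb_pos hN hα
  set A := s ^ ((N:ℝ)*α/2 - 1) with hAdef
  set B := s ^ (b/2 - 1) with hBdef
  have hsp : A * s = s ^ ((N:ℝ)*α/2) := by
    rw [hAdef, ← Real.rpow_add_one hs.ne']
    congr 1
    ring
  have hq : B * s = s ^ (b/2) := by
    rw [hBdef, ← Real.rpow_add_one hs.ne']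
    congr 1
    ring
  rw [← hsp, ← hq]
  have hD : (0:ℝ) < 1 + B * s := by rw [hq]; exact (q_nonneg (N := N) (α := α) hs.le).2
  have e1 : ((1 + B * s) : ℝ) ^ N = (1 + B * s) ^ (k + 2) := by rw [hNdef]
  have e2 : ((1 + B * s) : ℝ) ^ (N - 1) = (1 + B * s) ^ (k + 1) := by congr 1
  rw [e1, e2, show N - 1 = k + 1 from rfl, hbdef, bb]
  have hcast : ((N:ℝ)) = ((k:ℝ)) + 2 := by rw [hNdef]; push_cast; ring
  rw [hcast] at hne ⊢
  have hk1 : (k:ℝ) + 1 ≠ 0 := by positivity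
  have hk2 : (k:ℝ) + 2 - 1 = k + 1 := by ring
  rw [hk2]
  have hX : (1 + B*s)^(k+2) = (1+B*s)^(k+1) * (1+B*s) := pow_succ _ _
  have hY : (1+B*s)^(k+1) ≠ 0 := by positivity
  rw [hX]
  generalize ((↑k + 2) * ((↑k + 2) * (α + 1) / (↑k + 1))) ^ (k + 1) = C
  generalize (1 + B*s)^(k+1) = Y at hY ⊢
  field_simp
  ring

end S16


/-- `Z_α` solves the linearized equation `div(A(U_α)∇Z_α) + |x|^{Nα} e^{U_α} Z_α = 0`
pointwise on `ℝ^N \ {0}`. -/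
theorem statement16 (N : ℕ) (hN : 2 ≤ N) (α : ℝ) (hα : -1 < α) :
    ∀ x : EuclideanSpace ℝ (Fin N), x ≠ 0 →
      ediv (linField N α (Zalpha N α)) x
        + ‖x‖ ^ ((N : ℝ) * α) * Real.exp (Ualpha N α x) * Zalpha N α x = 0 := by
  intro x hx
  have hs : (0:ℝ) < ‖x‖^2 := pow_pos (norm_pos_iff.mpr hx) 2
  have hF : ∀ y : EuclideanSpace ℝ (Fin N), y ≠ 0 →
      linField N α (Zalpha N α) y = S16.gg N α (‖y‖^2) • y :=
    fun y hy => S16.linField_eq hN hα hy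
  rw [S16.ediv_field hN hα hx (S16.hasDerivAt_gg hN hα hs) hF]
  have hq0 : (0:ℝ) ≤ (‖x‖^2 : ℝ) ^ (((N:ℝ)*(α+1)/((N:ℝ)-1))/2) := Real.rpow_nonneg hs.le _
  have hexp : Real.exp (Ualpha N α x)
      = cconst N * (α+1)^N / (1+(‖x‖^2:ℝ)^(((N:ℝ)*(α+1)/((N:ℝ)-1))/2))^N := by
    rw [Ualpha, ← S16.normsq_rpow x ((N:ℝ)*(α+1)/((N:ℝ)-1))]
    exact Real.exp_log (div_pos (S16.Cc_pos hN hα) (pow_pos (by linarith) N))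
  have hZ : Zalpha N α x
      = ((N:ℝ) - 1 - (‖x‖^2:ℝ)^(((N:ℝ)*(α+1)/((N:ℝ)-1))/2))
        / (1+(‖x‖^2:ℝ)^(((N:ℝ)*(α+1)/((N:ℝ)-1))/2)) := by
    rw [Zalpha, ← S16.normsq_rpow x ((N:ℝ)*(α+1)/((N:ℝ)-1))]
  have hnorm : ‖x‖ ^ ((N:ℝ)*α) = (‖x‖^2 : ℝ) ^ ((N:ℝ)*α/2) :=
    (S16.normsq_rpow x _).symm
  rw [hnorm, hexp, hZ]
  exact S16.ode_identity hN hα hs
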